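/- For every m ≥ 1, D_m is an odd analytic function on the open unit disc; writing its Taylor expansion at 0 as D_m(z) = Σ_{k=0}^∞ d_{m,2k+1} z^{2k+1}, one has d_{m,1} = m+1, and there exists a constant K > 0 independent of m and k such that |d_{m,2k+1}| ≤ K (m+1) m^{2k} for all m ≥ 1 and k ≥ 1. Equivalently, D_m(z) = (m+1)·z·(1 + Σ_{k≥1} b_{m,2k}(mz)^{2k}) with |b_{m,2k}| ≤ K. -/

import Mathlib

open scoped Real BigOperators

/-- `D_m(z) = ((1+z)/2)(1−z)^{−m} − ((1−z)/2)(1+z)^{−m}`. -/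
noncomputable def Dm (m : ℕ) (z : ℂ) : ℂ :=
  (1 + z) / 2 * (1 - z) ^ (-(m : ℤ)) - (1 - z) / 2 * (1 + z) ^ (-(m : ℤ))

/-!
Expand `(1 ∓ z)^{-m} = ∑ multichoose m n (±z)^n`. In `D_m` the factors `(1 ± z) / 2` cancel the
even powers and merge `z^{2k}` with `z^{2k+1}`, so `d_{m,2k+1} = multichoose m (2k) +
multichoose m (2k+1)`. Since `multichoose m n ≤ m^n`, this is at most `(m+1) m^{2k}`: `K = 1`.
-/

theorem Nat.multichoose_le_pow : ∀ n k : ℕ, n.multichoose k ≤ n ^ k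
  | _, 0 => by simp
  | 0, k + 1 => by simp
  | n + 1, k + 1 => by
    rw [Nat.multichoose_succ_succ, pow_succ']
    have h₁ := Nat.multichoose_le_pow n (k + 1)
    have h₂ := Nat.multichoose_le_pow (n + 1) k
    have h₃ : n ^ (k + 1) ≤ n * (n + 1) ^ k := by
      rw [pow_succ']
      exact Nat.mul_le_mul_left n (Nat.pow_le_pow_left n.le_succ k)
    lia

theorem HasSum.even_odd_pairs {α : Type*} [AddCommGroup α] [UniformSpace α]
    [IsUniformAddGroup α] [CompleteSpace α] [T2Space α] {f : ℕ → α} {a : α} (hf : HasSum f a) :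
    HasSum (fun k ↦ f (2 * k) + f (2 * k + 1)) a := by
  have he := (hf.summable.comp_injective (mul_right_injective₀ two_ne_zero)).hasSum
  have ho := (hf.summable.comp_injective
    ((add_left_injective 1).comp (mul_right_injective₀ two_ne_zero))).hasSum
  rw [← (he.even_add_odd ho).unique hf]
  exact he.add ho

theorem hasSum_multichoose_mul_pow {𝕜 : Type*} [NormedField 𝕜] (m : ℕ) {z : 𝕜} (hz : ‖z‖ < 1) :
    HasSum (fun n ↦ (m.multichoose n : 𝕜) * z ^ n) ((1 - z) ^ m)⁻¹ := by
  cases m with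
  | zero =>
    convert hasSum_single (f := fun n ↦ ((0 : ℕ).multichoose n : 𝕜) * z ^ n) 0 _ using 1
    · simp
    · intro n hn
      obtain ⟨k, rfl⟩ := Nat.exists_eq_succ_of_ne_zero hn
      simp
  | succ M =>
    convert hasSum_choose_mul_geometric_of_norm_lt_one M hz using 1
    · funext n
      rw [Nat.multichoose_eq, Nat.add_right_comm, Nat.add_sub_cancel, add_comm n,
        Nat.choose_symm_add]
    · rw [one_div]

theorem hasSum_odd_part {𝕜 : Type*} [NormedField 𝕜] [CompleteSpace 𝕜] [NeZero (2 : 𝕜)]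
    {a : ℕ → 𝕜} {z F G : 𝕜}
    (hF : HasSum (fun n ↦ a n * z ^ n) F) (hG : HasSum (fun n ↦ a n * (-z) ^ n) G) :
    HasSum (fun k ↦ (a (2 * k) + a (2 * k + 1)) * z ^ (2 * k + 1))
      ((1 + z) / 2 * F - (1 - z) / 2 * G) := by
  refine ((hF.mul_left ((1 + z) / 2)).sub (hG.mul_left ((1 - z) / 2))).even_odd_pairs.congr_fun
    fun k ↦ ?_
  simp only [(even_two_mul k).neg_pow, (odd_two_mul_add_one k).neg_pow]
  field_simp
  ring

theorem analyticOnNhd_Dm (m : ℕ) : AnalyticOnNhd ℂ (Dm m) (Metric.ball 0 1) := by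
  intro z hz
  rw [mem_ball_zero_iff] at hz
  have h₁ : 1 - z ≠ 0 := by rw [sub_ne_zero]; rintro rfl; simp at hz
  have h₂ : 1 + z ≠ 0 := by rw [Ne, add_eq_zero_iff_neg_eq]; rintro rfl; simp at hz
  unfold Dm
  simp only [zpow_neg, zpow_natCast]
  fun_prop (disch := exact pow_ne_zero _ ‹_›)

theorem Dm_neg (m : ℕ) (z : ℂ) : Dm m (-z) = -Dm m z := by
  simp only [Dm, sub_neg_eq_add, ← sub_eq_add_neg]
  ring

def DmCoeff (m k : ℕ) : ℕ := m.multichoose (2 * k) + m.multichoose (2 * k + 1)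

theorem DmCoeff_zero (m : ℕ) : DmCoeff m 0 = m + 1 := by
  simp [DmCoeff, add_comm]

theorem DmCoeff_le (m k : ℕ) : DmCoeff m k ≤ (m + 1) * m ^ (2 * k) := by
  have h₀ := Nat.multichoose_le_pow m (2 * k)
  have h₁ := Nat.multichoose_le_pow m (2 * k + 1)
  rw [DmCoeff, add_mul, one_mul, ← pow_succ']
  lia

theorem hasSum_Dm (m : ℕ) {z : ℂ} (hz : ‖z‖ < 1) :
    HasSum (fun k ↦ (DmCoeff m k : ℂ) * z ^ (2 * k + 1)) (Dm m z) := by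
  have hF := hasSum_multichoose_mul_pow m hz
  have hG := hasSum_multichoose_mul_pow m (z := -z) (by rwa [norm_neg])
  rw [sub_neg_eq_add] at hG
  simpa only [Dm, DmCoeff, zpow_neg, zpow_natCast, Nat.cast_add] using hasSum_odd_part hF hG

theorem Dm_odd_expansion :
    ∃ K : ℝ, 0 < K ∧ ∃ d : ℕ → ℕ → ℂ,
      ∀ m : ℕ, 1 ≤ m →
        AnalyticOnNhd ℂ (Dm m) (Metric.ball (0 : ℂ) 1) ∧
        (∀ z : ℂ, ‖z‖ < 1 → Dm m (-z) = -Dm m z) ∧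
        (∀ z : ℂ, ‖z‖ < 1 →
          HasSum (fun k : ℕ => d m k * z ^ (2 * k + 1)) (Dm m z)) ∧
        d m 0 = (m : ℂ) + 1 ∧
        (∀ k : ℕ, 1 ≤ k → ‖d m k‖ ≤ K * (m + 1) * (m : ℝ) ^ (2 * k)) := by
  refine ⟨1, one_pos, fun m k ↦ DmCoeff m k, fun m _ ↦
    ⟨analyticOnNhd_Dm m, fun z _ ↦ Dm_neg m z, fun z hz ↦ hasSum_Dm m hz, ?_, fun k _ ↦ ?_⟩⟩
  · simp [DmCoeff_zero]
  · rw [Complex.norm_natCast, one_mul]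
    exact_mod_cast DmCoeff_le m k
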